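/- arXiv:1303.6376 — 5 statements merged into one kernel-verified Lean document; each statement's English description precedes it below -/
import Mathlib

section
/- For every q ∈ ℂ with |q| < 1: Σ_{(m,n)∈ℤ², m≡1, n≡1 (mod 6)} ((m+3n)/4)·q^{(m²+3n²)/4} = Σ_{(m,n)∈ℤ², (m,n)≡(1,0) or (−2,3) (mod 6)} (m+3n)·q^{m²+3n²} + Σ_{(m,n)∈ℤ², (m,n)≡(2,−1) or (−1,2) (mod 6)} ((m+3n)/2)·q^{m²+3n²}. -/
/-!
Split the pairs `(m, n) ≡ (1, 1) (mod 6)` according to whether `4 ∣ m - n`. The first class is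
the bijective image of `B₁` under `(u, v) ↦ (u + 3v, u - v)`, the second that of `B₂` under
`(u, v) ↦ (3v - u, u + v)`. Both maps multiply `m² + 3n²` by `4`, and they turn `(m + 3n) / 4`
into `u` and `(u + 3v) / 2` respectively. Finally, `B₁` is symmetric under `v ↦ -v`, so the
`3v`-part of `(u + 3v) q^(u² + 3v²)` sums to zero over `B₁`.
-/

lemma summable_one_add_natAbs_mul_pow {t : ℝ} (h0 : 0 ≤ t) (h1 : t < 1) :
    Summable fun m : ℤ => (1 + m.natAbs : ℝ) * t ^ m.natAbs := by
  have h : Summable fun n : ℕ => (1 + n : ℝ) * t ^ n := by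
    simpa [add_mul] using (summable_geometric_of_lt_one h0 h1).add
      (summable_pow_mul_geometric_of_norm_lt_one 1 (by rwa [Real.norm_of_nonneg h0]))
  exact .of_nat_of_neg (by simpa using h) (by simpa using h)

lemma norm_mul_intCast_add_mul_intCast_le (a b : ℂ) (m n : ℤ) :
    ‖a * m + b * n‖ ≤ (‖a‖ + ‖b‖) * ((1 + m.natAbs) * (1 + n.natAbs)) := by
  have hm : ‖(m : ℂ)‖ = m.natAbs := by
    rw [Complex.norm_intCast, Nat.cast_natAbs, Int.cast_abs]
  have hn : ‖(n : ℂ)‖ = n.natAbs := by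
    rw [Complex.norm_intCast, Nat.cast_natAbs, Int.cast_abs]
  have hm₀ : (0 : ℝ) ≤ m.natAbs := m.natAbs.cast_nonneg
  have hn₀ : (0 : ℝ) ≤ n.natAbs := n.natAbs.cast_nonneg
  calc ‖a * m + b * n‖ ≤ ‖a‖ * m.natAbs + ‖b‖ * n.natAbs := by
        simpa only [norm_mul, hm, hn] using norm_add_le (a * m) (b * n)
    _ ≤ ‖a‖ * ((1 + m.natAbs) * (1 + n.natAbs)) +
          ‖b‖ * ((1 + m.natAbs) * (1 + n.natAbs)) := by
        gcongr <;> nlinarith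
    _ = _ := by ring

lemma summable_linear_mul_zpow {q : ℂ} (hq : ‖q‖ < 1) (a b : ℂ) {N : ℤ × ℤ → ℤ}
    (k : ℕ) (hN₀ : ∀ p, 0 ≤ N p) (hN : ∀ p, (p.1.natAbs + p.2.natAbs : ℤ) ≤ N p + k) :
    Summable fun p : ℤ × ℤ => (a * p.1 + b * p.2) * q ^ N p := by
  obtain ⟨t, hqt, ht₁⟩ := exists_between hq
  have ht₀ : 0 < t := (norm_nonneg q).trans_lt hqt
  have hg := summable_one_add_natAbs_mul_pow ht₀.le ht₁
  refine .of_norm_bounded (((hg.mul_of_nonneg hg (fun _ => by positivity)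
    (fun _ => by positivity)).mul_left ((‖a‖ + ‖b‖) / t ^ k))) fun ⟨m, n⟩ => ?_
  have hpow : ‖q‖ ^ N (m, n) ≤ t ^ m.natAbs * t ^ n.natAbs / t ^ k := calc
    ‖q‖ ^ N (m, n) ≤ t ^ N (m, n) := zpow_le_zpow_left₀ (hN₀ _) (norm_nonneg _) hqt.le
    _ ≤ t ^ ((m.natAbs + n.natAbs : ℤ) - k) :=
      zpow_le_zpow_right_of_le_one₀ ht₀ ht₁.le (by linarith [hN (m, n)])
    _ = t ^ m.natAbs * t ^ n.natAbs / t ^ k := by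
      rw [zpow_sub₀ ht₀.ne', zpow_add₀ ht₀.ne', zpow_natCast, zpow_natCast, zpow_natCast]
  calc ‖(a * m + b * n) * q ^ N (m, n)‖ = ‖a * m + b * n‖ * ‖q‖ ^ N (m, n) := by
        rw [norm_mul, norm_zpow]
    _ ≤ (‖a‖ + ‖b‖) * ((1 + m.natAbs) * (1 + n.natAbs)) *
          (t ^ m.natAbs * t ^ n.natAbs / t ^ k) :=
        mul_le_mul (norm_mul_intCast_add_mul_intCast_le a b m n) hpow (by positivity)
          (by positivity)
    _ = _ := by ring

lemma tsum_eq_zero_of_comp_eq_neg {α G : Type*} [AddCommGroup G] [TopologicalSpace G]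
    [IsTopologicalAddGroup G] [T2Space G] [IsAddTorsionFree G] {f : α → G} (e : α ≃ α)
    (h : ∀ x, f (e x) = -f x) : ∑' x, f x = 0 :=
  self_eq_neg.mp <| (e.tsum_eq f).symm.trans <| (tsum_congr h).trans tsum_neg

lemma natAbs_add_natAbs_le_sq_add_three_mul_sq (m n : ℤ) :
    (m.natAbs + n.natAbs : ℤ) ≤ m ^ 2 + 3 * n ^ 2 := by
  nlinarith [Int.natAbs_le_self_sq m, Int.natAbs_le_self_sq n, sq_nonneg n]

lemma natAbs_add_natAbs_le_sq_add_three_mul_sq_div_four (m n : ℤ) :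
    (m.natAbs + n.natAbs : ℤ) ≤ (m ^ 2 + 3 * n ^ 2) / 4 + 2 := by
  have hm : (m.natAbs : ℤ) ^ 2 = m ^ 2 := Int.natAbs_sq m
  have hn : (n.natAbs : ℤ) ^ 2 = n ^ 2 := Int.natAbs_sq n
  suffices (m.natAbs + n.natAbs : ℤ) - 2 ≤ (m ^ 2 + 3 * n ^ 2) / 4 by omega
  rw [Int.le_ediv_iff_mul_le four_pos]
  nlinarith [sq_nonneg ((m.natAbs : ℤ) - 2), sq_nonneg ((n.natAbs : ℤ) - 2),
    sq_nonneg (n.natAbs : ℤ)]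

namespace ThetaIdentity

def A : Set (ℤ × ℤ) := {p | p.1 ≡ 1 [ZMOD 6] ∧ p.2 ≡ 1 [ZMOD 6]}

def B₁ : Set (ℤ × ℤ) :=
  {p | p.1 ≡ 1 [ZMOD 6] ∧ p.2 ≡ 0 [ZMOD 6] ∨ p.1 ≡ -2 [ZMOD 6] ∧ p.2 ≡ 3 [ZMOD 6]}

def B₂ : Set (ℤ × ℤ) :=
  {p | p.1 ≡ 2 [ZMOD 6] ∧ p.2 ≡ -1 [ZMOD 6] ∨ p.1 ≡ -1 [ZMOD 6] ∧ p.2 ≡ 2 [ZMOD 6]}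

-- In `ℤ[√-3]`, `φ₁ z = (1 + √-3) z̄` and `φ₂ z = (-1 + √-3) z̄`; both multiply the
-- norm `m ^ 2 + 3 * n ^ 2` by `4`.
def φ₁ (p : ℤ × ℤ) : ℤ × ℤ := (p.1 + 3 * p.2, p.1 - p.2)

def φ₂ (p : ℤ × ℤ) : ℤ × ℤ := (3 * p.2 - p.1, p.1 + p.2)

lemma φ₁_injective : Function.Injective φ₁ := by
  rintro ⟨u, v⟩ ⟨u', v'⟩ h
  simp only [φ₁, Prod.mk.injEq] at h ⊢
  omega

lemma φ₂_injective : Function.Injective φ₂ := by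
  rintro ⟨u, v⟩ ⟨u', v'⟩ h
  simp only [φ₂, Prod.mk.injEq] at h ⊢
  omega

lemma image_φ₁ : φ₁ '' B₁ = A ∩ {p | 4 ∣ p.1 - p.2} := by
  ext ⟨m, n⟩
  simp only [A, B₁, φ₁, Set.mem_image, Set.mem_inter_iff, Set.mem_ofPred_eq, Prod.exists,
    Prod.mk.injEq, Int.ModEq]
  constructor
  · rintro ⟨u, v, hB, rfl, rfl⟩
    omega
  · rintro ⟨hA, h4⟩
    exact ⟨(m + 3 * n) / 4, (m - n) / 4, by omega, by omega, by omega⟩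

lemma image_φ₂ : φ₂ '' B₂ = A \ {p | 4 ∣ p.1 - p.2} := by
  ext ⟨m, n⟩
  simp only [A, B₂, φ₂, Set.mem_image, Set.mem_sdiff, Set.mem_ofPred_eq, Prod.exists,
    Prod.mk.injEq, Int.ModEq]
  constructor
  · rintro ⟨u, v, hB, rfl, rfl⟩
    omega
  · rintro ⟨hA, h4⟩
    exact ⟨(3 * n - m) / 4, (m + n) / 4, by omega, by omega, by omega⟩

lemma mk_neg_mem_B₁ {p : ℤ × ℤ} : (p.1, -p.2) ∈ B₁ ↔ p ∈ B₁ := by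
  simp only [B₁, Set.mem_ofPred_eq, Int.ModEq]
  omega

variable {q : ℂ}

lemma summable_sq_add_three_mul_sq (hq : ‖q‖ < 1) (a b : ℂ) :
    Summable fun p : ℤ × ℤ => (a * p.1 + b * p.2) * q ^ (p.1 ^ 2 + 3 * p.2 ^ 2) :=
  summable_linear_mul_zpow hq a b 0 (fun _ => by positivity)
    fun p => by simpa using natAbs_add_natAbs_le_sq_add_three_mul_sq p.1 p.2

lemma summable_sq_add_three_mul_sq_div_four (hq : ‖q‖ < 1) :
    Summable fun p : ℤ × ℤ =>
      ((p.1 + 3 * p.2 : ℂ) / 4) * q ^ ((p.1 ^ 2 + 3 * p.2 ^ 2) / 4) :=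
  (summable_linear_mul_zpow hq (1 / 4) (3 / 4) 2 (fun _ => by positivity)
    fun p => natAbs_add_natAbs_le_sq_add_three_mul_sq_div_four p.1 p.2).congr fun _ => by ring

lemma tsum_B₁_eq_tsum_fst (hq : ‖q‖ < 1) :
    ∑' p : B₁, (p.1.1 + 3 * p.1.2 : ℂ) * q ^ (p.1.1 ^ 2 + 3 * p.1.2 ^ 2) =
      ∑' p : B₁, (p.1.1 : ℂ) * q ^ (p.1.1 ^ 2 + 3 * p.1.2 ^ 2) := by
  have hodd : ∑' p : B₁, (3 * p.1.2 : ℂ) * q ^ (p.1.1 ^ 2 + 3 * p.1.2 ^ 2) = 0 := by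
    refine tsum_eq_zero_of_comp_eq_neg
      (((Equiv.refl ℤ).prodCongr (Equiv.neg ℤ)).subtypeEquiv fun _ => mk_neg_mem_B₁.symm)
      fun ⟨⟨u, v⟩, _⟩ => ?_
    change 3 * ((-v : ℤ) : ℂ) * q ^ (u ^ 2 + 3 * (-v) ^ 2) = _
    rw [neg_sq, Int.cast_neg]
    ring
  have hsum₁ : Summable fun p : B₁ => (p.1.1 : ℂ) * q ^ (p.1.1 ^ 2 + 3 * p.1.2 ^ 2) :=
    ((summable_sq_add_three_mul_sq hq 1 0).subtype B₁).congr fun _ => by simp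
  have hsum₂ : Summable fun p : B₁ => (3 * p.1.2 : ℂ) * q ^ (p.1.1 ^ 2 + 3 * p.1.2 ^ 2) :=
    ((summable_sq_add_three_mul_sq hq 0 3).subtype B₁).congr fun _ => by simp
  calc ∑' p : B₁, (p.1.1 + 3 * p.1.2 : ℂ) * q ^ (p.1.1 ^ 2 + 3 * p.1.2 ^ 2)
      = ∑' p : B₁, ((p.1.1 : ℂ) * q ^ (p.1.1 ^ 2 + 3 * p.1.2 ^ 2) +
          (3 * p.1.2 : ℂ) * q ^ (p.1.1 ^ 2 + 3 * p.1.2 ^ 2)) := tsum_congr fun _ => by ring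
    _ = _ := by rw [hsum₁.tsum_add hsum₂, hodd, add_zero]

lemma tsum_A_eq_tsum_B₁_add_tsum_B₂ (hq : ‖q‖ < 1) :
    ∑' p : A, ((p.1.1 + 3 * p.1.2 : ℂ) / 4) * q ^ ((p.1.1 ^ 2 + 3 * p.1.2 ^ 2) / 4) =
      ∑' p : B₁, (p.1.1 + 3 * p.1.2 : ℂ) * q ^ (p.1.1 ^ 2 + 3 * p.1.2 ^ 2) +
      ∑' p : B₂, ((p.1.1 + 3 * p.1.2 : ℂ) / 2) * q ^ (p.1.1 ^ 2 + 3 * p.1.2 ^ 2) := by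
  set F : ℤ × ℤ → ℂ := fun p =>
    ((p.1 + 3 * p.2 : ℂ) / 4) * q ^ ((p.1 ^ 2 + 3 * p.2 ^ 2) / 4)
  have hF := summable_sq_add_three_mul_sq_div_four hq
  calc ∑' p : A, F p = ∑' p : ↥(φ₁ '' B₁ ∪ φ₂ '' B₂), F p :=
        tsum_congr_set_coe F (by rw [image_φ₁, image_φ₂, Set.inter_union_sdiff])
    _ = ∑' p : φ₁ '' B₁, F p + ∑' p : φ₂ '' B₂, F p :=
        Summable.tsum_union_disjoint
          (by rw [image_φ₁, image_φ₂]; exact Set.disjoint_sdiff_inter.symm)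
          (hF.subtype _) (hF.subtype _)
    _ = ∑' p : B₁, F (φ₁ p) + ∑' p : B₂, F (φ₂ p) := by
        rw [tsum_image F φ₁_injective.injOn, tsum_image F φ₂_injective.injOn]
    _ = _ := by
        rw [tsum_B₁_eq_tsum_fst hq]
        congr 1 <;> refine tsum_congr fun ⟨⟨u, v⟩, _⟩ => ?_
        · have hQ : (u + 3 * v) ^ 2 + 3 * (u - v) ^ 2 = 4 * (u ^ 2 + 3 * v ^ 2) := by ring
          simp only [F, φ₁, hQ, Int.mul_ediv_cancel_left _ four_ne_zero]
          push_cast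
          ring
        · have hQ : (3 * v - u) ^ 2 + 3 * (u + v) ^ 2 = 4 * (u ^ 2 + 3 * v ^ 2) := by ring
          simp only [F, φ₂, hQ, Int.mul_ediv_cancel_left _ four_ne_zero]
          push_cast
          ring

end ThetaIdentity

theorem stmt8 (q : ℂ) (hq : ‖q‖ < 1) :
    (∑' p : {p : ℤ × ℤ // Int.ModEq 6 p.1 1 ∧ Int.ModEq 6 p.2 1},
        (((p.1.1 : ℂ) + 3 * (p.1.2 : ℂ)) / 4) * q ^ ((p.1.1 ^ 2 + 3 * p.1.2 ^ 2) / 4)) =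
      (∑' p : {p : ℤ × ℤ // (Int.ModEq 6 p.1 1 ∧ Int.ModEq 6 p.2 0) ∨
                            (Int.ModEq 6 p.1 (-2) ∧ Int.ModEq 6 p.2 3)},
        ((p.1.1 : ℂ) + 3 * (p.1.2 : ℂ)) * q ^ (p.1.1 ^ 2 + 3 * p.1.2 ^ 2)) +
      (∑' p : {p : ℤ × ℤ // (Int.ModEq 6 p.1 2 ∧ Int.ModEq 6 p.2 (-1)) ∨
                            (Int.ModEq 6 p.1 (-1) ∧ Int.ModEq 6 p.2 2)},
        (((p.1.1 : ℂ) + 3 * (p.1.2 : ℂ)) / 2) * q ^ (p.1.1 ^ 2 + 3 * p.1.2 ^ 2)) :=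
  ThetaIdentity.tsum_A_eq_tsum_B₁_add_tsum_B₂ hq
end

section
/- For every q ∈ ℂ with |q| < 1: Σ_{(m,n)∈ℤ², m≡−2, n≡−2 (mod 6)} ((m+3n)/4)·q^{(m²+3n²)/4} = Σ_{(m,n)∈ℤ², (m,n)≡(1,−1) or (−2,2) (mod 6)} (m+3n)·q^{m²+3n²} + Σ_{(m,n)∈ℤ², (m,n)≡(2,−1) or (−1,2) (mod 6)} ((m+3n)/2)·q^{m²+3n²}. -/
/-!
Write `Q (m, n) = m² + 3n²`, the norm form of `ℤ[√-3]`. Halving `(m, n)` turns the left-hand side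
into the sum of `(m + 3n)/2 · q^Q` over `m ≡ n ≡ -1 (mod 3)`, which splits according to the parity
of `m - n`; the odd part is the last sum on the right. The even part runs over the classes
`(2, 2), (-1, -1) mod 6`. The rotation `(m, n) ↦ ((m - 3n)/2, (m + n)/2)` (multiplication by a
sixth root of unity of `ℚ(√-3)`) preserves `Q`, maps these classes onto those of the first sum on
the right and carries `m + 3n` to `2m`. The reflection `(m, n) ↦ ((3n - m)/2, (m + n)/2)`
preserves `Q` and the classes and carries `2m` to `3n - m`, so averaging over it replaces `2m` by
`(m + 3n)/2`.
-/

namespace ThetaMod6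

def Q (p : ℤ × ℤ) : ℤ := p.1 ^ 2 + 3 * p.2 ^ 2

noncomputable def thetaSum (q : ℂ) (S : Set (ℤ × ℤ)) (c : ℤ × ℤ → ℂ) : ℂ :=
  ∑' p : S, c p * q ^ Q p

lemma summable_natAbs_add_one_mul_pow {r : ℝ} (h0 : 0 ≤ r) (h1 : r < 1) :
    Summable fun a : ℤ => ((a.natAbs : ℝ) + 1) * r ^ a.natAbs := by
  have hr : ‖r‖ < 1 := by rwa [Real.norm_of_nonneg h0]
  have hnat : Summable fun n : ℕ => ((n : ℝ) + 1) * r ^ n := by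
    simpa [add_mul] using (summable_pow_mul_geometric_of_norm_lt_one 1 hr).add
      (summable_geometric_of_lt_one h0 h1)
  exact .of_nat_of_neg (by simpa using hnat) (by simpa using hnat)

lemma Q_eq_natAbs (p : ℤ × ℤ) : Q p = ((p.1.natAbs ^ 2 + 3 * p.2.natAbs ^ 2 : ℕ) : ℤ) := by
  simp [Q]

lemma norm_zpow_Q_le {q : ℂ} (hq : ‖q‖ ≤ 1) (p : ℤ × ℤ) :
    ‖q ^ Q p‖ ≤ ‖q‖ ^ p.1.natAbs * ‖q‖ ^ p.2.natAbs := by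
  rw [Q_eq_natAbs, zpow_natCast, norm_pow, ← pow_add]
  refine pow_le_pow_of_le_one (norm_nonneg q) hq ?_
  nlinarith [Nat.le_self_pow two_ne_zero p.1.natAbs, Nat.le_self_pow two_ne_zero p.2.natAbs]

lemma norm_linear_le (a b : ℂ) (p : ℤ × ℤ) :
    ‖a * p.1 + b * p.2‖ ≤
      (‖a‖ + ‖b‖) * (((p.1.natAbs : ℝ) + 1) * ((p.2.natAbs : ℝ) + 1)) := by
  set X : ℝ := ((p.1.natAbs : ℝ) + 1) * ((p.2.natAbs : ℝ) + 1)
  have hm : (p.1.natAbs : ℝ) ≤ X := by unfold X; nlinarith [(p.2.natAbs.cast_nonneg : (0:ℝ) ≤ _)]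
  have hn : (p.2.natAbs : ℝ) ≤ X := by unfold X; nlinarith [(p.1.natAbs.cast_nonneg : (0:ℝ) ≤ _)]
  calc ‖a * p.1 + b * p.2‖ ≤ ‖a‖ * p.1.natAbs + ‖b‖ * p.2.natAbs := by
        simpa [Nat.cast_natAbs] using norm_add_le (a * p.1) (b * p.2)
    _ ≤ ‖a‖ * X + ‖b‖ * X := by gcongr
    _ = _ := by ring

lemma summable_linear_mul_zpow_Q {q : ℂ} (hq : ‖q‖ < 1) (a b : ℂ) :
    Summable fun p : ℤ × ℤ => (a * p.1 + b * p.2) * q ^ Q p := by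
  have h := summable_natAbs_add_one_mul_pow (norm_nonneg q) hq
  refine .of_norm_bounded ((h.mul_left (‖a‖ + ‖b‖)).mul_of_nonneg h (fun _ => by positivity)
    (fun _ => by positivity)) fun p => ?_
  rw [norm_mul]
  calc _ ≤ (‖a‖ + ‖b‖) * (((p.1.natAbs : ℝ) + 1) * ((p.2.natAbs : ℝ) + 1)) *
        (‖q‖ ^ p.1.natAbs * ‖q‖ ^ p.2.natAbs) :=
        mul_le_mul (norm_linear_le a b p) (norm_zpow_Q_le hq.le p) (norm_nonneg _) (by positivity)
    _ = _ := by ring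

def mod3Class : Set (ℤ × ℤ) := {p | p.1 ≡ -1 [ZMOD 3] ∧ p.2 ≡ -1 [ZMOD 3]}

def mod6Diag : Set (ℤ × ℤ) :=
  {p | (p.1 ≡ 2 [ZMOD 6] ∧ p.2 ≡ 2 [ZMOD 6]) ∨ (p.1 ≡ -1 [ZMOD 6] ∧ p.2 ≡ -1 [ZMOD 6])}

def mod6ClassB : Set (ℤ × ℤ) :=
  {p | (p.1 ≡ 1 [ZMOD 6] ∧ p.2 ≡ -1 [ZMOD 6]) ∨ (p.1 ≡ -2 [ZMOD 6] ∧ p.2 ≡ 2 [ZMOD 6])}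

def mod6ClassC : Set (ℤ × ℤ) :=
  {p | (p.1 ≡ 2 [ZMOD 6] ∧ p.2 ≡ -1 [ZMOD 6]) ∨ (p.1 ≡ -1 [ZMOD 6] ∧ p.2 ≡ 2 [ZMOD 6])}

lemma mod3Class_eq_union : mod3Class = mod6Diag ∪ mod6ClassC := by
  ext p; simp only [mod3Class, mod6Diag, mod6ClassC, Set.mem_union, Set.mem_ofPred_eq, Int.ModEq]
  omega

lemma disjoint_mod6Diag_mod6ClassC : Disjoint mod6Diag mod6ClassC := by
  refine Set.disjoint_left.2 fun p h₁ h₂ => ?_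
  simp only [mod6Diag, mod6ClassC, Set.mem_ofPred_eq, Int.ModEq] at h₁ h₂
  omega

def doubleEquiv : mod3Class ≃ {p : ℤ × ℤ // p.1 ≡ -2 [ZMOD 6] ∧ p.2 ≡ -2 [ZMOD 6]} where
  toFun p := ⟨(2 * p.1.1, 2 * p.1.2), by
    obtain ⟨_, h⟩ := p; simp only [mod3Class, Set.mem_ofPred_eq, Int.ModEq] at h ⊢; omega⟩
  invFun p := ⟨(p.1.1 / 2, p.1.2 / 2), by
    obtain ⟨_, h⟩ := p; simp only [mod3Class, Set.mem_ofPred_eq, Int.ModEq] at h ⊢; omega⟩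
  left_inv p := by ext <;> simp
  right_inv p := by obtain ⟨_, h⟩ := p; simp only [Int.ModEq] at h; ext <;> simp <;> omega

def rotate : mod6Diag ≃ mod6ClassB where
  toFun p := ⟨((p.1.1 - 3 * p.1.2) / 2, (p.1.1 + p.1.2) / 2), by
    obtain ⟨_, h⟩ := p
    simp only [mod6Diag, mod6ClassB, Set.mem_ofPred_eq, Int.ModEq] at h ⊢
    omega⟩
  invFun p := ⟨((p.1.1 + 3 * p.1.2) / 2, (p.1.2 - p.1.1) / 2), by
    obtain ⟨_, h⟩ := p
    simp only [mod6Diag, mod6ClassB, Set.mem_ofPred_eq, Int.ModEq] at h ⊢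
    omega⟩
  left_inv p := by
    obtain ⟨_, h⟩ := p; simp only [mod6Diag, Set.mem_ofPred_eq, Int.ModEq] at h
    ext <;> simp <;> omega
  right_inv p := by
    obtain ⟨_, h⟩ := p; simp only [mod6ClassB, Set.mem_ofPred_eq, Int.ModEq] at h
    ext <;> simp <;> omega

def reflect : mod6Diag ≃ mod6Diag :=
  Function.Involutive.toPerm
    (fun p => ⟨((3 * p.1.2 - p.1.1) / 2, (p.1.1 + p.1.2) / 2), by
      obtain ⟨_, h⟩ := p; simp only [mod6Diag, Set.mem_ofPred_eq, Int.ModEq] at h ⊢; omega⟩)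
    fun p => by
      obtain ⟨_, h⟩ := p; simp only [mod6Diag, Set.mem_ofPred_eq, Int.ModEq] at h
      ext <;> simp <;> omega

lemma Q_eq_of_two_mul_eq {m n a b : ℤ} (ha : (2 * a) ^ 2 = (m - 3 * n) ^ 2) (hb : 2 * b = m + n) :
    Q (a, b) = Q (m, n) := by
  have h : 4 * Q (a, b) = 4 * Q (m, n) := by
    unfold Q; linear_combination ha + 3 * (2 * b + m + n) * hb
  omega

lemma Q_rotate (p : mod6Diag) : Q (rotate p) = Q p := by
  obtain ⟨⟨m, n⟩, h⟩ := p
  simp only [mod6Diag, Set.mem_ofPred_eq, Int.ModEq] at h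
  exact Q_eq_of_two_mul_eq (a := (m - 3 * n) / 2) (b := (m + n) / 2) (by congr 1; omega) (by omega)

lemma fst_add_three_mul_snd_rotate (p : mod6Diag) :
    ((rotate p).1.1 : ℂ) + 3 * (rotate p).1.2 = 2 * p.1.1 := by
  obtain ⟨⟨m, n⟩, h⟩ := p
  simp only [mod6Diag, Set.mem_ofPred_eq, Int.ModEq] at h
  have h' : (m - 3 * n) / 2 + 3 * ((m + n) / 2) = 2 * m := by omega
  exact_mod_cast h'

lemma Q_reflect (p : mod6Diag) : Q (reflect p) = Q p := by
  obtain ⟨⟨m, n⟩, h⟩ := p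
  simp only [mod6Diag, Set.mem_ofPred_eq, Int.ModEq] at h
  exact Q_eq_of_two_mul_eq (a := (3 * n - m) / 2) (b := (m + n) / 2)
    (by rw [show 2 * ((3 * n - m) / 2) = 3 * n - m by omega]; ring) (by omega)

lemma two_mul_fst_reflect (p : mod6Diag) : 2 * ((reflect p).1.1 : ℂ) = 3 * p.1.2 - p.1.1 := by
  obtain ⟨⟨m, n⟩, h⟩ := p
  simp only [mod6Diag, Set.mem_ofPred_eq, Int.ModEq] at h
  have h' : 2 * ((3 * n - m) / 2) = 3 * n - m := by omega
  exact_mod_cast h'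

lemma tsum_eq_tsum_add_comp_div_two {β : Type*} (e : β ≃ β) {f : β → ℂ} (hf : Summable f) :
    ∑' x, f x = ∑' x, (f x + f (e x)) / 2 := by
  have hfe : Summable fun x => f (e x) := e.summable_iff.2 hf
  rw [tsum_div_const, hf.tsum_add hfe, e.tsum_eq]
  ring

lemma tsum_double_mod3Class (q : ℂ) :
    ∑' p : {p : ℤ × ℤ // p.1 ≡ -2 [ZMOD 6] ∧ p.2 ≡ -2 [ZMOD 6]},
        (((p.1.1 : ℂ) + 3 * (p.1.2 : ℂ)) / 4) * q ^ ((p.1.1 ^ 2 + 3 * p.1.2 ^ 2) / 4) =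
      thetaSum q mod3Class fun p => (p.1 + 3 * p.2) / 2 := by
  rw [← doubleEquiv.tsum_eq]
  refine tsum_congr fun p => ?_
  have h : (2 * p.1.1) ^ 2 + 3 * (2 * p.1.2) ^ 2 = 4 * Q p := by unfold Q; ring
  simp only [doubleEquiv, Equiv.coe_fn_mk, h, Int.mul_ediv_cancel_left _ four_ne_zero]
  push_cast; ring

lemma thetaSum_mod3Class_eq_add {q : ℂ} {c : ℤ × ℤ → ℂ} (hc : Summable fun p => c p * q ^ Q p) :
    thetaSum q mod3Class c = thetaSum q mod6Diag c + thetaSum q mod6ClassC c := by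
  rw [thetaSum, mod3Class_eq_union]
  exact Summable.tsum_union_disjoint (f := fun p => c p * q ^ Q p) disjoint_mod6Diag_mod6ClassC
    (hc.subtype _) (hc.subtype _)

lemma thetaSum_mod6ClassB_eq_mod6Diag (q : ℂ) :
    thetaSum q mod6ClassB (fun p => p.1 + 3 * p.2) = thetaSum q mod6Diag (fun p => 2 * p.1) := by
  rw [thetaSum, ← rotate.tsum_eq]
  exact tsum_congr fun p => by rw [fst_add_three_mul_snd_rotate, Q_rotate]

lemma thetaSum_mod6Diag_two_mul_fst {q : ℂ} (hq : ‖q‖ < 1) :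
    thetaSum q mod6Diag (fun p => 2 * p.1) =
      thetaSum q mod6Diag (fun p => (p.1 + 3 * p.2) / 2) := by
  have hf : Summable fun p : mod6Diag => 2 * (p.1.1 : ℂ) * q ^ Q p :=
    ((summable_linear_mul_zpow_Q hq 2 0).subtype mod6Diag).congr fun p => by
      simp only [Function.comp_apply, zero_mul, add_zero]
  rw [thetaSum, tsum_eq_tsum_add_comp_div_two reflect hf]
  refine tsum_congr fun p => ?_
  rw [two_mul_fst_reflect, Q_reflect]
  ring

end ThetaMod6

open ThetaMod6 in
theorem stmt9 (q : ℂ) (hq : ‖q‖ < 1) :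
    (∑' p : {p : ℤ × ℤ // Int.ModEq 6 p.1 (-2) ∧ Int.ModEq 6 p.2 (-2)},
        (((p.1.1 : ℂ) + 3 * (p.1.2 : ℂ)) / 4) * q ^ ((p.1.1 ^ 2 + 3 * p.1.2 ^ 2) / 4)) =
      (∑' p : {p : ℤ × ℤ // (Int.ModEq 6 p.1 1 ∧ Int.ModEq 6 p.2 (-1)) ∨
                            (Int.ModEq 6 p.1 (-2) ∧ Int.ModEq 6 p.2 2)},
        ((p.1.1 : ℂ) + 3 * (p.1.2 : ℂ)) * q ^ (p.1.1 ^ 2 + 3 * p.1.2 ^ 2)) +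
      (∑' p : {p : ℤ × ℤ // (Int.ModEq 6 p.1 2 ∧ Int.ModEq 6 p.2 (-1)) ∨
                            (Int.ModEq 6 p.1 (-1) ∧ Int.ModEq 6 p.2 2)},
        (((p.1.1 : ℂ) + 3 * (p.1.2 : ℂ)) / 2) * q ^ (p.1.1 ^ 2 + 3 * p.1.2 ^ 2)) := by
  have hc : Summable fun p : ℤ × ℤ => ((p.1 + 3 * p.2) / 2 : ℂ) * q ^ Q p :=
    (summable_linear_mul_zpow_Q hq (1 / 2) (3 / 2)).congr fun p => by ring
  rw [tsum_double_mod3Class]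
  change _ = thetaSum q mod6ClassB (fun p => p.1 + 3 * p.2) +
    thetaSum q mod6ClassC (fun p => (p.1 + 3 * p.2) / 2)
  rw [thetaSum_mod3Class_eq_add hc, ← thetaSum_mod6Diag_two_mul_fst hq,
    thetaSum_mod6ClassB_eq_mod6Diag]
end

section
/- For every q ∈ ℂ with |q| < 1: Σ_{(m,n)∈ℤ², (m,n)≡(−1,−1) or (2,2) (mod 6)} (m+3n)·q^{m²+3n²} = 2 · Σ_{(m,n)∈ℤ², (m,n)≡(1,−1) or (−2,2) (mod 6)} (m+3n)·q^{m²+3n²}. -/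
/-!
Negating `m` carries the right-hand classes onto the left-hand ones and fixes `m² + 3n²`, so the
right-hand sum is `∑_L (-m + 3n) q^(m² + 3n²)` over the left-hand classes `L`. Since
`(m + 3n) - 2(-m + 3n) = 3(m - n)`, it remains to see that `∑_L (m - n) q^(m² + 3n²)` vanishes.
For this, `(m, n) ↦ ((3n - m)/2, (m + n)/2)` is an involution of `L` that preserves `m² + 3n²`
and negates `m - n`.
-/

open Function

section Summability

lemma summable_natAbs_add_one_mul_pow {r : ℝ} (h0 : 0 ≤ r) (h1 : r < 1) :
    Summable fun n : ℤ => ((n.natAbs : ℝ) + 1) * r ^ n.natAbs := by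
  have hr : ‖r‖ < 1 := by rwa [Real.norm_of_nonneg h0]
  have hnat : Summable fun n : ℕ => ((n : ℝ) + 1) * r ^ n :=
    ((summable_pow_mul_geometric_of_norm_lt_one 1 hr).add
      (summable_geometric_of_lt_one h0 h1)).congr fun n => by ring
  exact .of_nat_of_neg (by simpa using hnat) (by simpa using hnat)

variable {𝕜 : Type*} [NormedField 𝕜]

lemma norm_intCast_le_natAbs (m : ℤ) : ‖(m : 𝕜)‖ ≤ m.natAbs := by
  obtain ⟨k, rfl | rfl⟩ := Int.eq_nat_or_neg m <;> simpa using Nat.norm_cast_le (α := 𝕜) k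

lemma norm_zpow_sq_add_mul_sq_le {q : 𝕜} (hq : ‖q‖ ≤ 1) (m n : ℤ) {c : ℕ} (hc : 1 ≤ c) :
    ‖q ^ (m ^ 2 + c * n ^ 2)‖ ≤ ‖q‖ ^ m.natAbs * ‖q‖ ^ n.natAbs := by
  have hexp : m ^ 2 + c * n ^ 2 = ((m.natAbs ^ 2 + c * n.natAbs ^ 2 : ℕ) : ℤ) := by
    push_cast [Int.natCast_natAbs, sq_abs]
    rfl
  have hle : m.natAbs + n.natAbs ≤ m.natAbs ^ 2 + c * n.natAbs ^ 2 := by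
    nlinarith [Nat.le_self_pow two_ne_zero m.natAbs, Nat.le_self_pow two_ne_zero n.natAbs]
  rw [hexp, zpow_natCast, norm_pow, ← pow_add]
  exact pow_le_pow_of_le_one (norm_nonneg q) hq hle

theorem summable_linear_mul_zpow_sq_add_mul_sq [CompleteSpace 𝕜] {q : 𝕜} (hq : ‖q‖ < 1)
    (a b : 𝕜) {c : ℕ} (hc : 1 ≤ c) :
    Summable fun p : ℤ × ℤ => (a * p.1 + b * p.2) * q ^ (p.1 ^ 2 + c * p.2 ^ 2) := by
  have h1 := summable_natAbs_add_one_mul_pow (norm_nonneg q) hq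
  refine .of_norm_bounded ((h1.mul_of_nonneg h1 (fun _ => by positivity)
    (fun _ => by positivity)).mul_left (‖a‖ + ‖b‖)) fun ⟨m, n⟩ => ?_
  have hlin : ‖a * m + b * n‖ ≤ (‖a‖ + ‖b‖) * (((m.natAbs : ℝ) + 1) * ((n.natAbs : ℝ) + 1)) := by
    have hm := norm_intCast_le_natAbs (𝕜 := 𝕜) m
    have hn := norm_intCast_le_natAbs (𝕜 := 𝕜) n
    calc ‖a * m + b * n‖ ≤ ‖a‖ * m.natAbs + ‖b‖ * n.natAbs := by
          refine (norm_add_le _ _).trans ?_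
          rw [norm_mul, norm_mul]
          gcongr
      _ ≤ ‖a‖ * (((m.natAbs : ℝ) + 1) * ((n.natAbs : ℝ) + 1)) +
            ‖b‖ * (((m.natAbs : ℝ) + 1) * ((n.natAbs : ℝ) + 1)) := by
          gcongr <;> nlinarith [(m.natAbs.cast_nonneg : (0 : ℝ) ≤ _),
            (n.natAbs.cast_nonneg : (0 : ℝ) ≤ _)]
      _ = _ := by ring
  calc ‖(a * m + b * n) * q ^ (m ^ 2 + c * n ^ 2)‖
      ≤ (‖a‖ + ‖b‖) * (((m.natAbs : ℝ) + 1) * ((n.natAbs : ℝ) + 1)) *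
          (‖q‖ ^ m.natAbs * ‖q‖ ^ n.natAbs) := by
        rw [norm_mul]
        exact mul_le_mul hlin (norm_zpow_sq_add_mul_sq_le hq.le m n hc) (norm_nonneg _)
          (by positivity)
    _ = _ := by ring

end Summability

theorem tsum_eq_zero_of_involutive_of_apply_eq_neg {α G : Type*} [AddCommGroup G]
    [TopologicalSpace G] [IsTopologicalAddGroup G] [T2Space G] [IsAddTorsionFree G]
    {σ : α → α} (hσ : Involutive σ) {f : α → G} (hf : ∀ x, f (σ x) = -f x) :
    ∑' x, f x = 0 := by
  have h := (hσ.toPerm σ).tsum_eq f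
  simp only [Involutive.coe_toPerm, hf, tsum_neg] at h
  exact self_eq_neg.mp h.symm

def lhsClasses : Set (ℤ × ℤ) :=
  {p | p.1 ≡ -1 [ZMOD 6] ∧ p.2 ≡ -1 [ZMOD 6] ∨ p.1 ≡ 2 [ZMOD 6] ∧ p.2 ≡ 2 [ZMOD 6]}

def rhsClasses : Set (ℤ × ℤ) :=
  {p | p.1 ≡ 1 [ZMOD 6] ∧ p.2 ≡ -1 [ZMOD 6] ∨ p.1 ≡ -2 [ZMOD 6] ∧ p.2 ≡ 2 [ZMOD 6]}

noncomputable def weightedTerm (q a b : ℂ) (p : ℤ × ℤ) : ℂ :=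
  (a * p.1 + b * p.2) * q ^ (p.1 ^ 2 + 3 * p.2 ^ 2)

lemma summable_weightedTerm {q : ℂ} (hq : ‖q‖ < 1) (a b : ℂ) : Summable (weightedTerm q a b) := by
  have h := summable_linear_mul_zpow_sq_add_mul_sq hq a b (c := 3) (by norm_num)
  rwa [Nat.cast_ofNat] at h

def negFstEquiv : lhsClasses ≃ rhsClasses :=
  (Equiv.prodCongr (Equiv.neg ℤ) (Equiv.refl ℤ)).subtypeEquiv fun p => by
    simp only [lhsClasses, rhsClasses, Set.mem_ofPred_eq, Int.ModEq, Equiv.prodCongr_apply,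
      Prod.map_fst, Prod.map_snd, Equiv.neg_apply, Equiv.refl_apply]
    omega

lemma tsum_rhsClasses_weightedTerm (q a b : ℂ) :
    ∑' p : rhsClasses, weightedTerm q a b p = ∑' p : lhsClasses, weightedTerm q (-a) b p := by
  rw [← negFstEquiv.tsum_eq]
  refine tsum_congr fun p => ?_
  simp only [weightedTerm, negFstEquiv, Equiv.subtypeEquiv_apply, Equiv.prodCongr_apply,
    Prod.map_fst, Prod.map_snd, Equiv.neg_apply, Equiv.refl_apply, neg_sq, Int.cast_neg]
  ring

section EisensteinReflection

/-- With `z = m + n√-3` and `ω = (-1 + √-3)/2`, this is `z ↦ ω z̄`, a reflection of the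
Eisenstein integers; it preserves the norm `m² + 3n²` and is integral when `m ≡ n [ZMOD 2]`. -/
def eisensteinReflection (p : ℤ × ℤ) : ℤ × ℤ :=
  ((3 * p.2 - p.1) / 2, (p.1 + p.2) / 2)

variable {p : ℤ × ℤ}

lemma eisensteinReflection_eisensteinReflection (hp : p.1 ≡ p.2 [ZMOD 2]) :
    eisensteinReflection (eisensteinReflection p) = p := by
  obtain ⟨m, n⟩ := p
  simp only [eisensteinReflection, Int.ModEq, Prod.mk.injEq] at hp ⊢
  omega

lemma eisensteinReflection_fst_sub_snd (hp : p.1 ≡ p.2 [ZMOD 2]) :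
    (eisensteinReflection p).1 - (eisensteinReflection p).2 = -(p.1 - p.2) := by
  simp only [eisensteinReflection, Int.ModEq] at hp ⊢
  omega

lemma eisensteinReflection_norm (hp : p.1 ≡ p.2 [ZMOD 2]) :
    (eisensteinReflection p).1 ^ 2 + 3 * (eisensteinReflection p).2 ^ 2 = p.1 ^ 2 + 3 * p.2 ^ 2 := by
  obtain ⟨m, n⟩ := p
  simp only [eisensteinReflection, Int.ModEq] at hp ⊢
  have hu : 2 * ((3 * n - m) / 2) = 3 * n - m := Int.mul_ediv_cancel' (by omega)
  have hv : 2 * ((m + n) / 2) = m + n := Int.mul_ediv_cancel' (by omega)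
  refine mul_left_cancel₀ (four_ne_zero' ℤ) ?_
  linear_combination (2 * ((3 * n - m) / 2) + (3 * n - m)) * hu +
    3 * (2 * ((m + n) / 2) + (m + n)) * hv

lemma mapsTo_eisensteinReflection_lhsClasses :
    Set.MapsTo eisensteinReflection lhsClasses lhsClasses := by
  rintro ⟨m, n⟩ hp
  simp only [lhsClasses, eisensteinReflection, Set.mem_ofPred_eq, Int.ModEq] at hp ⊢
  omega

end EisensteinReflection

lemma fst_modEq_snd_of_mem_lhsClasses {p : ℤ × ℤ} (hp : p ∈ lhsClasses) : p.1 ≡ p.2 [ZMOD 2] := by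
  simp only [lhsClasses, Set.mem_ofPred_eq, Int.ModEq] at hp ⊢
  omega

lemma tsum_lhsClasses_weightedTerm_one_neg_one (q : ℂ) :
    ∑' p : lhsClasses, weightedTerm q 1 (-1) p = 0 := by
  refine tsum_eq_zero_of_involutive_of_apply_eq_neg
    (σ := mapsTo_eisensteinReflection_lhsClasses.restrict) (fun p => Subtype.ext ?_) fun p => ?_
  · exact eisensteinReflection_eisensteinReflection (fst_modEq_snd_of_mem_lhsClasses p.2)
  · have hp := fst_modEq_snd_of_mem_lhsClasses p.2
    have hsub : ((eisensteinReflection p).1 : ℂ) - (eisensteinReflection p).2 = -(p.1.1 - p.1.2) := by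
      exact_mod_cast eisensteinReflection_fst_sub_snd hp
    simp only [weightedTerm, Set.MapsTo.val_restrict_apply, eisensteinReflection_norm hp]
    linear_combination q ^ (p.1.1 ^ 2 + 3 * p.1.2 ^ 2) * hsub

theorem stmt10 (q : ℂ) (hq : ‖q‖ < 1) :
    (∑' p : {p : ℤ × ℤ // (Int.ModEq 6 p.1 (-1) ∧ Int.ModEq 6 p.2 (-1)) ∨
                          (Int.ModEq 6 p.1 2 ∧ Int.ModEq 6 p.2 2)},
        ((p.1.1 : ℂ) + 3 * (p.1.2 : ℂ)) * q ^ (p.1.1 ^ 2 + 3 * p.1.2 ^ 2)) =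
      2 * ∑' p : {p : ℤ × ℤ // (Int.ModEq 6 p.1 1 ∧ Int.ModEq 6 p.2 (-1)) ∨
                               (Int.ModEq 6 p.1 (-2) ∧ Int.ModEq 6 p.2 2)},
        ((p.1.1 : ℂ) + 3 * (p.1.2 : ℂ)) * q ^ (p.1.1 ^ 2 + 3 * p.1.2 ^ 2) := by
  change ∑' p : lhsClasses, _ = 2 * ∑' p : rhsClasses, _
  have hsum (a b : ℂ) : Summable fun p : lhsClasses => weightedTerm q a b p :=
    (summable_weightedTerm hq a b).subtype lhsClasses
  have hterm (p : ℤ × ℤ) : ((p.1 : ℂ) + 3 * p.2) * q ^ (p.1 ^ 2 + 3 * p.2 ^ 2) =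
      weightedTerm q 1 3 p := by
    simp only [weightedTerm, one_mul]
  simp only [hterm, tsum_rhsClasses_weightedTerm]
  calc ∑' p : lhsClasses, weightedTerm q 1 3 p
      = ∑' p : lhsClasses, (2 * weightedTerm q (-1) 3 p + 3 * weightedTerm q 1 (-1) p) :=
        tsum_congr fun p => by simp only [weightedTerm]; ring
    _ = 2 * ∑' p : lhsClasses, weightedTerm q (-1) 3 p := by
        rw [((hsum _ _).mul_left 2).tsum_add ((hsum _ _).mul_left 3), tsum_mul_left, tsum_mul_left,
          tsum_lhsClasses_weightedTerm_one_neg_one, mul_zero, add_zero]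
end

section
/- Let s ∈ ℂ with s ≠ 0 and s ≠ 64, and let E_s be the elliptic curve y² = (x − 1)(x² − s/(s−64)), i.e., the Weierstrass curve over ℂ with coefficients a₁ = 0, a₂ = −1, a₃ = 0, a₄ = −s/(s−64), a₆ = s/(s−64). Then E_s has nonzero discriminant and its j-invariant equals (s − 16)³/s. -/
/-- The Weierstrass curve `y² = (x − 1)(x² − s/(s−64))`, i.e.
`y² = x³ − x² − (s/(s−64))x + s/(s−64)`. -/
noncomputable def Ws (s : ℂ) : WeierstrassCurve ℂ :=
  ⟨0, -1, 0, -(s / (s - 64)), s / (s - 64)⟩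

/-!
Writing `c = s / (s - 64)`, the curve `y² = (x - 1)(x² - c)` has `c₄ = 16 (1 + 3c)` and
`Δ = 64 c (c - 1)²`. The substitution gives `1 + 3c = 4 (s - 16) / (s - 64)` and
`c - 1 = 64 / (s - 64)`, and the powers of `s - 64` cancel in `c₄³ / Δ`.
-/

namespace WeierstrassCurve

variable {R : Type*} [CommRing R]

/-- The curve `y² = (x - 1)(x² - c) = x³ - x² - c x + c`. -/
def ofRootOne (c : R) : WeierstrassCurve R :=
  ⟨0, -1, 0, -c, c⟩

lemma ofRootOne_c₄ (c : R) : (ofRootOne c).c₄ = 16 * (1 + 3 * c) := by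
  simp only [ofRootOne, c₄, b₂, b₄]
  ring

lemma ofRootOne_Δ (c : R) : (ofRootOne c).Δ = 64 * c * (c - 1) ^ 2 := by
  simp only [ofRootOne, Δ, b₂, b₄, b₆, b₈]
  ring

lemma ofRootOne_Δ_ne_zero {F : Type*} [Field F] (h2 : (2 : F) ≠ 0) {c : F} (h0 : c ≠ 0)
    (h1 : c ≠ 1) : (ofRootOne c).Δ ≠ 0 := by
  rw [ofRootOne_Δ]
  have h64 : (64 : F) = 2 ^ 6 := by norm_num
  exact mul_ne_zero (mul_ne_zero (h64 ▸ pow_ne_zero _ h2) h0) (pow_ne_zero _ (sub_ne_zero.2 h1))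

end WeierstrassCurve

open WeierstrassCurve

theorem stmt16 (s : ℂ) (h0 : s ≠ 0) (h64 : s ≠ 64) :
    (Ws s).Δ ≠ 0 ∧ (Ws s).c₄ ^ 3 / (Ws s).Δ = (s - 16) ^ 3 / s := by
  have hs : s - 64 ≠ 0 := sub_ne_zero.2 h64
  have hc0 : s / (s - 64) ≠ 0 := div_ne_zero h0 hs
  have hc1 : s / (s - 64) ≠ 1 := by
    rw [Ne, div_eq_one_iff_eq hs]
    intro h
    exact absurd (by linear_combination h : (64 : ℂ) = 0) (by norm_num)
  have hWs : Ws s = ofRootOne (s / (s - 64)) := rfl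
  rw [hWs]
  refine ⟨ofRootOne_Δ_ne_zero two_ne_zero hc0 hc1, ?_⟩
  rw [ofRootOne_c₄, ofRootOne_Δ]
  field_simp
  ring
end

section
/- For every real μ with 0 ≤ μ < 1/64: (1/(2π)³) ∫₀^{2π}∫₀^{2π}∫₀^{2π} dθ₁ dθ₂ dθ₃ / (1 − 8√μ · cos θ₁ cos θ₂ cos θ₃) = Σ_{k=0}^∞ ((1/2)_k / k!)³ · (64μ)^k, i.e., the period integral of the K3 family equals the hypergeometric series ₃F₂(1/2, 1/2, 1/2; 1, 1; 64μ). -/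
/-!
Expand `(1 - x cos θ)⁻¹` as a geometric series and integrate term by term, one angle at a time.
With the moments `W n = ∫₀^{2π} cos^n`, integrating `∑ W_k^j y^k` at `y = x cos θ` gives
`∑ W_k^{j+1} x^k`, so the triple integral is `∑ W_k³ (8√μ)^k`. The odd moments vanish, and the
reduction formula for `∫ cos^n` gives Wallis' `W_{2m} = 2π (1/2)_m / m!`.
-/

/-- Pochhammer symbol `(a)_k = a(a+1)⋯(a+k−1)`. -/
noncomputable def poch (a : ℝ) (k : ℕ) : ℝ := ∏ i ∈ Finset.range k, (a + i)

open Real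

theorem poch_succ (a : ℝ) (k : ℕ) : poch a (k + 1) = poch a k * (a + k) :=
  Finset.prod_range_succ _ _

noncomputable def cosMoment (n : ℕ) : ℝ := ∫ t in (0:ℝ)..2 * π, cos t ^ n

theorem cosMoment_add_two (n : ℕ) :
    cosMoment (n + 2) = (n + 1) / (n + 2) * cosMoment n := by
  simp [cosMoment, integral_cos_pow]

theorem cosMoment_odd (m : ℕ) : cosMoment (2 * m + 1) = 0 := by
  induction m with
  | zero => simp [cosMoment]
  | succ m ih => rw [show 2 * (m + 1) + 1 = 2 * m + 1 + 2 by ring, cosMoment_add_two, ih, mul_zero]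

theorem cosMoment_two_mul (m : ℕ) :
    cosMoment (2 * m) = 2 * π * (poch (1 / 2) m / m.factorial) := by
  induction m with
  | zero => simp [cosMoment, poch]
  | succ m ih =>
    rw [show 2 * (m + 1) = 2 * m + 2 by ring, cosMoment_add_two, ih, poch_succ,
      Nat.factorial_succ]
    push_cast
    field_simp
    ring

theorem abs_cosMoment_le (n : ℕ) : |cosMoment n| ≤ 2 * π := by
  have h := intervalIntegral.norm_integral_le_of_norm_le_const (a := 0) (b := 2 * π) (C := 1)
    (f := fun t => cos t ^ n) fun t _ => by
      rw [norm_pow, Real.norm_eq_abs]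
      exact pow_le_one₀ (abs_nonneg _) (abs_cos_le_one t)
  simpa [cosMoment, abs_of_pos two_pi_pos] using h

theorem integral_tsum_mul_cos_pow {c : ℕ → ℝ} (hc : Summable fun k => |c k|) (a b : ℝ) :
    ∫ t in a..b, ∑' k, c k * cos t ^ k = ∑' k, c k * ∫ t in a..b, cos t ^ k := by
  have hbound : ∀ k t, ‖c k * cos t ^ k‖ ≤ |c k| := fun k t => by
    rw [norm_mul, norm_pow, Real.norm_eq_abs, Real.norm_eq_abs]
    exact mul_le_of_le_one_right (abs_nonneg _) (pow_le_one₀ (abs_nonneg _) (abs_cos_le_one t))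
  simp_rw [← intervalIntegral.integral_const_mul]
  refine (intervalIntegral.hasSum_integral_of_dominated_convergence (fun k _ => |c k|)
    (fun k => (continuous_const.mul (continuous_cos.pow k)).aestronglyMeasurable)
    (fun k => .of_forall fun t _ => hbound k t) (.of_forall fun _ _ => hc)
    intervalIntegrable_const
    (.of_forall fun t _ => (hc.of_norm_bounded (hbound · t)).hasSum)).tsum_eq.symm

noncomputable def cosMomentSeries (j : ℕ) (x : ℝ) : ℝ := ∑' k, cosMoment k ^ j * x ^ k

theorem summable_abs_cosMoment_pow_mul_pow (j : ℕ) {x : ℝ} (hx : |x| < 1) :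
    Summable fun k => |cosMoment k ^ j * x ^ k| := by
  refine .of_nonneg_of_le (fun _ => abs_nonneg _) (fun k => ?_)
    ((summable_geometric_of_lt_one (abs_nonneg x) hx).mul_left ((2 * π) ^ j))
  rw [abs_mul, abs_pow, abs_pow]
  gcongr
  exact abs_cosMoment_le k

theorem cosMomentSeries_zero {x : ℝ} (hx : |x| < 1) : cosMomentSeries 0 x = (1 - x)⁻¹ := by
  simpa [cosMomentSeries] using tsum_geometric_of_norm_lt_one (Real.norm_eq_abs x ▸ hx)

theorem integral_cosMomentSeries_mul_cos (j : ℕ) {x : ℝ} (hx : |x| < 1) :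
    ∫ t in (0:ℝ)..2 * π, cosMomentSeries j (x * cos t) = cosMomentSeries (j + 1) x := by
  simp only [cosMomentSeries, mul_pow, ← mul_assoc]
  rw [integral_tsum_mul_cos_pow (summable_abs_cosMoment_pow_mul_pow j hx)]
  exact tsum_congr fun k => by rw [← cosMoment, pow_succ]; ring

theorem abs_mul_cos_lt {x : ℝ} (hx : |x| < 1) (t : ℝ) : |x * cos t| < 1 := by
  rw [abs_mul]
  exact lt_of_le_of_lt (mul_le_of_le_one_right (abs_nonneg x) (abs_cos_le_one t)) hx

theorem integral_inv_one_sub_mul_cos {x : ℝ} (hx : |x| < 1) :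
    ∫ t in (0:ℝ)..2 * π, (1 - x * cos t)⁻¹ = cosMomentSeries 1 x := by
  rw [← integral_cosMomentSeries_mul_cos 0 hx]
  exact intervalIntegral.integral_congr fun t _ =>
    (cosMomentSeries_zero (abs_mul_cos_lt hx t)).symm

theorem cosMomentSeries_eq_tsum_two_mul {j : ℕ} (hj : j ≠ 0) (x : ℝ) :
    cosMomentSeries j x = ∑' m, cosMoment (2 * m) ^ j * x ^ (2 * m) := by
  refine ((mul_right_injective₀ two_ne_zero).tsum_eq fun k hk => ?_).symm
  obtain ⟨m, rfl | rfl⟩ := k.even_or_odd'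
  · exact ⟨m, rfl⟩
  · simp [cosMoment_odd, hj] at hk

theorem stmt17 (μ : ℝ) (h0 : 0 ≤ μ) (h1 : μ < 1/64) :
    (1 / (2 * Real.pi) ^ 3) *
      ∫ θ₁ in (0:ℝ)..(2 * Real.pi), ∫ θ₂ in (0:ℝ)..(2 * Real.pi),
        ∫ θ₃ in (0:ℝ)..(2 * Real.pi),
          1 / (1 - 8 * Real.sqrt μ * Real.cos θ₁ * Real.cos θ₂ * Real.cos θ₃) =
      ∑' k : ℕ, (poch (1/2) k / (Nat.factorial k : ℝ)) ^ 3 * (64 * μ) ^ k := by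
  have hx : |8 * √μ| < 1 := by
    rw [abs_of_nonneg (by positivity)]
    nlinarith [Real.sq_sqrt h0, Real.sqrt_nonneg μ]
  have hx₁ := abs_mul_cos_lt hx
  have hx₂ := fun s => abs_mul_cos_lt (hx₁ s)
  simp only [one_div, integral_inv_one_sub_mul_cos, integral_cosMomentSeries_mul_cos,
    hx, hx₁, hx₂]
  rw [cosMomentSeries_eq_tsum_two_mul three_ne_zero, ← tsum_mul_left]
  refine tsum_congr fun m => ?_
  rw [cosMoment_two_mul, pow_mul, mul_pow 8, Real.sq_sqrt h0]
  field_simp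
  ring
end
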